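/- arXiv:1301.4793 — 2 statements merged into one kernel-verified Lean document; each statement's English description precedes it below -/
import Mathlib

section
/- Let A be a real n×n matrix that is diagonalizable over ℂ as A = Q Λ Q⁻¹ with Q an invertible complex n×n matrix and Λ = diag(λ₁,…,λₙ), let B be a real n×m matrix, set Ψ := Q⁻¹B (Q⁻¹B)ᴴ, and assume λ_k + conj(λ_ℓ) ≠ 0 for all 1 ≤ k, ℓ ≤ n. Then for every t ≥ 0, ∫₀ᵗ e^{Aτ} B Bᵀ e^{Aᵀτ} dτ = Q Θf(t) Qᴴ, where Θf(t) is the complex n×n matrix with entries Θf(t)_{k,ℓ} = ψ_{k,ℓ} / (λ_k + conj(λ_ℓ)) · (e^{(λ_k + conj(λ_ℓ)) t} − 1) and ψ_{k,ℓ} denotes the (k,ℓ) entry of Ψ. -/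
/-!
Over `ℂ` we have `e^{τA} = Q e^{τΛ} Q⁻¹`, so with `C = Q⁻¹B` the integrand is
`(e^{τA}B)(e^{τA}B)ᴴ = Q (D C)(D C)ᴴ Qᴴ` for the diagonal `D = e^{τΛ}`. The middle factor has
entries `ψ_{kl} e^{(λ_k + conj λ_l) τ}`, and integrating these scalar exponentials entrywise,
which is legitimate since `λ_k + conj λ_l ≠ 0`, gives `Θf(t)`.
-/

open Matrix MeasureTheory

namespace Matrix

variable {m : Type*} [Fintype m] [DecidableEq m]

theorem map_exp {𝔸 𝔹 : Type*} [NormedRing 𝔸] [NormedAlgebra ℚ 𝔸] [CompleteSpace 𝔸]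
    [NormedRing 𝔹] [Algebra ℚ 𝔹] (f : 𝔸 →+* 𝔹) (hf : Continuous f) (M : Matrix m m 𝔸) :
    (NormedSpace.exp M).map f = NormedSpace.exp (M.map f) := by
  let : NormedRing (Matrix m m 𝔸) := Matrix.linftyOpNormedRing
  let : NormedAlgebra ℚ (Matrix m m 𝔸) := Matrix.linftyOpNormedAlgebra
  let : NormedRing (Matrix m m 𝔹) := Matrix.linftyOpNormedRing
  -- the operator norm induces the product uniformity, so `Matrix`'s completeness instance applies
  exact @NormedSpace.map_exp _ _ _ _ (inferInstanceAs (CompleteSpace (Matrix m m 𝔸))) _ _ _ _ _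
    f.mapMatrix (continuous_id.matrix_map hf) M

theorem exp_conj_diagonal (Q : Matrix m m ℂ) (hQ : IsUnit Q) (d : m → ℂ) :
    NormedSpace.exp (Q * diagonal d * Q⁻¹) = Q * diagonal (fun k => Complex.exp (d k)) * Q⁻¹ := by
  rw [exp_conj Q _ hQ, exp_diagonal, Pi.exp_def, Complex.exp_eq_exp_ℂ]

theorem diagonal_mul_mul_conjTranspose_diagonal {α : Type*} [Semiring α] [StarRing α]
    (d : m → α) (M : Matrix m m α) :
    diagonal d * M * (diagonal d)ᴴ = of fun k l => d k * M k l * star (d l) := by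
  ext k l
  simp [diagonal_conjTranspose, mul_diagonal, diagonal_mul]

theorem map_ofReal_transpose {n p : Type*} (X : Matrix n p ℝ) :
    Xᵀ.map Complex.ofReal = (X.map Complex.ofReal)ᴴ := by
  ext; simp

theorem map_ofReal_mul {n p q : Type*} [Fintype p] (X : Matrix n p ℝ) (Y : Matrix p q ℝ) :
    (X * Y).map Complex.ofReal = X.map Complex.ofReal * Y.map Complex.ofReal :=
  Matrix.map_mul (f := Complex.ofRealHom)

theorem map_ofReal_mul_transpose {n p : Type*} [Fintype p] (X : Matrix n p ℝ) :
    (X * Xᵀ).map Complex.ofReal = X.map Complex.ofReal * (X.map Complex.ofReal)ᴴ := by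
  rw [map_ofReal_mul, map_ofReal_transpose]

end Matrix

theorem intervalIntegral_mul_of_mul_apply {l m n o 𝕜 : Type*} [Fintype m] [Fintype n] [RCLike 𝕜]
    {μ : Measure ℝ} {a b : ℝ} (P : Matrix l m 𝕜) (F : ℝ → m → n → 𝕜) (R : Matrix n o 𝕜)
    (hF : ∀ i j, IntervalIntegrable (fun τ => F τ i j) μ a b) (k : l) (r : o) :
    ∫ τ in a..b, (P * of (F τ) * R) k r ∂μ
      = (P * (of fun i j => ∫ τ in a..b, F τ i j ∂μ) * R) k r := by
  have hterm : ∀ i j, IntervalIntegrable (fun τ => P k i * F τ i j * R j r) μ a b :=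
    fun i j => ((hF i j).const_mul _).mul_const _
  simp only [mul_apply, of_apply, Finset.sum_mul]
  rw [intervalIntegral.integral_finsetSum]
  · refine Finset.sum_congr rfl fun j _ => ?_
    rw [intervalIntegral.integral_finsetSum fun i _ => hterm i j]
    refine Finset.sum_congr rfl fun i _ => ?_
    rw [intervalIntegral.integral_mul_const, intervalIntegral.integral_const_mul]
  · exact fun j _ => by
      simpa only [Finset.sum_fn] using IntervalIntegrable.sum Finset.univ fun i _ => hterm i j

theorem integral_const_mul_cexp_mul (ψ : ℂ) {c : ℂ} (hc : c ≠ 0) (t : ℝ) :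
    ∫ τ in (0 : ℝ)..t, ψ * Complex.exp (c * τ) = ψ / c * (Complex.exp (c * t) - 1) := by
  rw [intervalIntegral.integral_const_mul, integral_exp_mul_complex hc, Complex.ofReal_zero,
    mul_zero, Complex.exp_zero]
  ring

section Gramian

variable {n p : Type*} [Fintype n] [DecidableEq n] [Fintype p]
  {A : Matrix n n ℝ} {Q : Matrix n n ℂ} {lam : n → ℂ}

theorem map_ofReal_exp_smul_eq_conj_diagonal (hQ : IsUnit Q)
    (hA : A.map Complex.ofReal = Q * diagonal lam * Q⁻¹) (τ : ℝ) :
    (NormedSpace.exp (τ • A)).map Complex.ofReal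
      = Q * diagonal (fun k => Complex.exp (τ * lam k)) * Q⁻¹ := by
  have hsmul : (τ • A).map Complex.ofReal = Q * diagonal (fun k => τ * lam k) * Q⁻¹ := by
    rw [Matrix.map_smul' _ _ _ (fun a b => Complex.ofReal_mul a b), hA, ← Matrix.smul_mul,
      ← Matrix.mul_smul, ← diagonal_smul]
    rfl
  change (NormedSpace.exp (τ • A)).map Complex.ofRealHom = _
  rw [map_exp Complex.ofRealHom Complex.continuous_ofReal]
  change NormedSpace.exp ((τ • A).map Complex.ofReal) = _
  rw [hsmul, exp_conj_diagonal Q hQ]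

theorem map_ofReal_exp_smul_mul_mul_exp_smul_transpose (hQ : IsUnit Q)
    (hA : A.map Complex.ofReal = Q * diagonal lam * Q⁻¹) (B : Matrix n p ℝ) (τ : ℝ) :
    (NormedSpace.exp (τ • A) * (B * Bᵀ) * NormedSpace.exp (τ • Aᵀ)).map Complex.ofReal
      = Q * (of fun k l => ((Q⁻¹ * B.map Complex.ofReal) * (Q⁻¹ * B.map Complex.ofReal)ᴴ) k l *
          Complex.exp ((lam k + starRingEnd ℂ (lam l)) * τ)) * Qᴴ := by
  set C := Q⁻¹ * B.map Complex.ofReal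
  set D := diagonal fun k => Complex.exp (τ * lam k)
  have hfactor : NormedSpace.exp (τ • A) * (B * Bᵀ) * NormedSpace.exp (τ • Aᵀ)
      = (NormedSpace.exp (τ • A) * B) * (NormedSpace.exp (τ • A) * B)ᵀ := by
    rw [← transpose_smul, exp_transpose, transpose_mul]
    simp only [Matrix.mul_assoc]
  have hEB : (NormedSpace.exp (τ • A) * B).map Complex.ofReal = Q * D * C := by
    rw [map_ofReal_mul, map_ofReal_exp_smul_eq_conj_diagonal hQ hA]
    simp only [C, D, Matrix.mul_assoc]
  calc _ = (Q * D * C) * (Q * D * C)ᴴ := by rw [hfactor, map_ofReal_mul_transpose, hEB]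
    _ = Q * (D * (C * Cᴴ) * Dᴴ) * Qᴴ := by
        simp only [conjTranspose_mul, Matrix.mul_assoc]
    _ = _ := by
        rw [diagonal_mul_mul_conjTranspose_diagonal]
        congr 2
        ext k l
        simp only [of_apply]
        rw [add_mul, Complex.exp_add, mul_comm (lam k), mul_comm (starRingEnd ℂ (lam l)),
          Complex.star_def, ← Complex.exp_conj, map_mul, Complex.conj_ofReal]
        ring

end Gramian

theorem forward_gramian_closed_form_matrix_input_general
    {n m : ℕ} (A : Matrix (Fin n) (Fin n) ℝ) (Q : Matrix (Fin n) (Fin n) ℂ)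
    (lam : Fin n → ℂ) (B : Matrix (Fin n) (Fin m) ℝ)
    (hQ : IsUnit Q.det)
    (hA : A.map (Complex.ofReal) = Q * Matrix.diagonal lam * Q⁻¹)
    (hlam : ∀ k l : Fin n, lam k + starRingEnd ℂ (lam l) ≠ 0)
    (Ψ : Matrix (Fin n) (Fin n) ℂ)
    (hΨ : Ψ = (Q⁻¹ * B.map (Complex.ofReal)) * (Q⁻¹ * B.map (Complex.ofReal))ᴴ)
    (t : ℝ) :
    (Matrix.of fun k l : Fin n =>
        ∫ τ in (0:ℝ)..t,
          (NormedSpace.exp (τ • A) * (B * Bᵀ) *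
            NormedSpace.exp (τ • Aᵀ)) k l).map (Complex.ofReal)
      = Q * (Matrix.of fun k l : Fin n =>
            Ψ k l / (lam k + starRingEnd ℂ (lam l)) *
              (Complex.exp ((lam k + starRingEnd ℂ (lam l)) * t) - 1)) * Qᴴ := by
  have hQu : IsUnit Q := (isUnit_iff_isUnit_det Q).mpr hQ
  ext k l
  rw [map_apply, of_apply, ← intervalIntegral.integral_ofReal]
  calc _ = ∫ τ in (0:ℝ)..t, (Q * (of fun i j =>
          Ψ i j * Complex.exp ((lam i + starRingEnd ℂ (lam j)) * τ)) * Qᴴ) k l :=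
        intervalIntegral.integral_congr fun τ _ => by
          rw [hΨ, ← map_ofReal_exp_smul_mul_mul_exp_smul_transpose hQu hA B τ, map_apply]
    _ = _ := by
        rw [intervalIntegral_mul_of_mul_apply _ _ _ fun i j =>
          (by fun_prop : Continuous _).intervalIntegrable _ _]
        simp only [integral_const_mul_cexp_mul _ (hlam _ _)]

/-- closed form of the forward Gramian integral with a matrix input
`∫₀ᵗ e^{Aτ} B Bᵀ e^{Aᵀτ} dτ = Q Θf(t) Qᴴ` where `Θf(t)ₖₗ = ψₖₗ/(λₖ+conj λₗ)·(e^{(λₖ+conj λₗ)t}−1)`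
and `Ψ = Q⁻¹B (Q⁻¹B)ᴴ`. -/
theorem forward_gramian_closed_form_matrix_input
    {n m : ℕ} (A : Matrix (Fin n) (Fin n) ℝ) (Q : Matrix (Fin n) (Fin n) ℂ)
    (lam : Fin n → ℂ) (B : Matrix (Fin n) (Fin m) ℝ)
    (hQ : IsUnit Q.det)
    (hA : A.map (Complex.ofReal) = Q * Matrix.diagonal lam * Q⁻¹)
    (hlam : ∀ k l : Fin n, lam k + starRingEnd ℂ (lam l) ≠ 0)
    (Ψ : Matrix (Fin n) (Fin n) ℂ)
    (hΨ : Ψ = (Q⁻¹ * B.map (Complex.ofReal)) * (Q⁻¹ * B.map (Complex.ofReal))ᴴ)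
    (t : ℝ) (ht : 0 ≤ t) :
    (Matrix.of fun k l : Fin n =>
        ∫ τ in (0:ℝ)..t,
          (NormedSpace.exp (τ • A) * (B * Bᵀ) *
            NormedSpace.exp (τ • Aᵀ)) k l).map (Complex.ofReal)
      = Q * (Matrix.of fun k l : Fin n =>
            Ψ k l / (lam k + starRingEnd ℂ (lam l)) *
              (Complex.exp ((lam k + starRingEnd ℂ (lam l)) * t) - 1)) * Qᴴ :=
  forward_gramian_closed_form_matrix_input_general A Q lam B hQ hA hlam Ψ hΨ t
end

section
/- Let A be a real n×n matrix that is diagonalizable over ℂ as A = Q Λ Q⁻¹ with Q an invertible complex n×n matrix and Λ = diag(λ₁,…,λₙ), let B be a real n×m matrix, set Ψ := Q⁻¹B (Q⁻¹B)ᴴ, and assume λ_k + conj(λ_ℓ) ≠ 0 for all 1 ≤ k, ℓ ≤ n. Then for every t ≥ 0, ∫₀ᵗ e^{−Aτ} B Bᵀ e^{−Aᵀτ} dτ = Q Θb(t) Qᴴ, where Θb(t) is the complex n×n matrix with entries Θb(t)_{k,ℓ} = ψ_{k,ℓ} / (λ_k + conj(λ_ℓ)) · (1 − e^{−(λ_k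 + conj(λ_ℓ)) t}) and ψ_{k,ℓ} denotes the (k,ℓ) entry of Ψ. -/
/-!
After complexification, `e^{-τA} = Q diag(e^{-τλ}) Q⁻¹` and, taking conjugate transposes,
`e^{-τAᵀ} = Q⁻ᴴ diag(e^{-τ conj λ}) Qᴴ`. Hence the integrand is
`Q (ψₖₗ e^{-(λₖ + conj λₗ)τ})ₖₗ Qᴴ`, and since integration commutes entrywise with the
constant factors `Q` and `Qᴴ`, everything reduces to the scalar integrals
`∫₀ᵗ e^{-sτ} dτ = (1 - e^{-st}) / s` for `s ≠ 0`.
-/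

open Matrix MeasureTheory ComplexConjugate

namespace Matrix

theorem map_ofReal_mul_s3 {ι κ κ' : Type*} [Fintype ι] (L : Matrix κ ι ℝ)
    (M : Matrix ι κ' ℝ) :
    (L * M).map Complex.ofReal = L.map Complex.ofReal * M.map Complex.ofReal :=
  Matrix.map_mul (f := Complex.ofRealHom)

theorem transpose_map_ofReal {ι κ : Type*} (X : Matrix ι κ ℝ) :
    Xᵀ.map Complex.ofReal = (X.map Complex.ofReal)ᴴ := by
  rw [← conjTranspose_eq_transpose_of_trivial, conjTranspose_map _ fun _ => by simp]

variable {ι : Type*} [Fintype ι] [DecidableEq ι]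

section

-- `NormedSpace.map_exp` needs a complete normed algebra structure on matrices.
attribute [local instance] Matrix.linftyOpNormedRing Matrix.linftyOpNormedAlgebra

theorem exp_map_ofReal (M : Matrix ι ι ℝ) :
    (NormedSpace.exp M).map Complex.ofReal = NormedSpace.exp (M.map Complex.ofReal) :=
  NormedSpace.map_exp Complex.ofRealHom.mapMatrix
    (continuous_id.matrix_map Complex.continuous_ofReal) M

end

theorem exp_diagonal_complex (v : ι → ℂ) :
    NormedSpace.exp (diagonal v) = diagonal fun i => Complex.exp (v i) := by
  rw [exp_diagonal, Pi.exp_def, Complex.exp_eq_exp_ℂ]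

variable {A : Matrix ι ι ℝ} {Q : Matrix ι ι ℂ} {lam : ι → ℂ}

theorem exp_smul_map_ofReal_of_diagonalization (hQ : IsUnit Q)
    (hA : A.map Complex.ofReal = Q * diagonal lam * Q⁻¹) (τ : ℝ) :
    (NormedSpace.exp (τ • A)).map Complex.ofReal
      = Q * diagonal (fun i => Complex.exp (τ * lam i)) * Q⁻¹ := by
  have hτA : (τ • A).map Complex.ofReal = Q * diagonal (fun i => τ * lam i) * Q⁻¹ := by
    rw [Matrix.map_smulₛₗ _ Complex.ofReal τ (fun _ => Complex.ofReal_mul _ _), hA,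
      ← smul_mul_assoc, ← mul_smul_comm]
    congr 2
    exact (diagonal_smul _ _).symm
  rw [exp_map_ofReal, hτA, exp_conj _ _ hQ, exp_diagonal_complex]

theorem exp_smul_transpose_map_ofReal_of_diagonalization (hQ : IsUnit Q)
    (hA : A.map Complex.ofReal = Q * diagonal lam * Q⁻¹) (τ : ℝ) :
    (NormedSpace.exp (τ • Aᵀ)).map Complex.ofReal
      = Q⁻¹ᴴ * diagonal (fun i => Complex.exp (τ * conj (lam i))) * Qᴴ := by
  rw [← transpose_smul, exp_transpose, transpose_map_ofReal,
    exp_smul_map_ofReal_of_diagonalization hQ hA,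
    conjTranspose_mul, conjTranspose_mul, diagonal_conjTranspose, Matrix.mul_assoc]
  congr 3
  ext i
  simp [← Complex.exp_conj]

theorem exp_smul_mul_mul_exp_smul_transpose_map_ofReal_of_diagonalization (hQ : IsUnit Q)
    (hA : A.map Complex.ofReal = Q * diagonal lam * Q⁻¹) (M : Matrix ι ι ℝ) (τ : ℝ) :
    (NormedSpace.exp (τ • A) * M * NormedSpace.exp (τ • Aᵀ)).map Complex.ofReal
      = Q * (of fun k l => (Q⁻¹ * M.map Complex.ofReal * Q⁻¹ᴴ) k l *
          Complex.exp (τ * (lam k + conj (lam l)))) * Qᴴ := by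
  have hmodal : (of fun k l => (Q⁻¹ * M.map Complex.ofReal * Q⁻¹ᴴ) k l *
      Complex.exp (τ * (lam k + conj (lam l)))) =
      diagonal (fun i => Complex.exp (τ * lam i)) * (Q⁻¹ * M.map Complex.ofReal * Q⁻¹ᴴ) *
        diagonal (fun i => Complex.exp (τ * conj (lam i))) := by
    ext k l
    rw [mul_diagonal, diagonal_mul, of_apply, mul_add, Complex.exp_add]
    ring
  rw [hmodal, map_ofReal_mul_s3, map_ofReal_mul_s3, exp_smul_map_ofReal_of_diagonalization hQ hA,
    exp_smul_transpose_map_ofReal_of_diagonalization hQ hA]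
  simp only [Matrix.mul_assoc]

theorem intervalIntegral_mul_mul {𝕜 ι ι' κ κ' : Type*} [RCLike 𝕜] [Fintype ι]
    [Fintype ι']
    (P : Matrix κ ι 𝕜) (F : ℝ → Matrix ι ι' 𝕜) (R : Matrix ι' κ' 𝕜) {a b : ℝ}
    (hF : ∀ i j, IntervalIntegrable (fun τ => F τ i j) volume a b) :
    (of fun k l => ∫ τ in a..b, (P * F τ * R) k l) =
      P * (of fun i j => ∫ τ in a..b, F τ i j) * R := by
  ext k l
  have hterm : ∀ i j, IntervalIntegrable (fun τ => P k i * F τ i j * R j l) volume a b :=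
    fun i j => ((hF i j).const_mul _).mul_const _
  have hrow : ∀ j, IntervalIntegrable (fun τ => ∑ i, P k i * F τ i j * R j l) volume a b :=
    fun j => by
      simpa only [Finset.sum_fn] using IntervalIntegrable.sum Finset.univ fun i _ => hterm i j
  simp only [mul_apply, of_apply, Finset.sum_mul]
  rw [intervalIntegral.integral_finsetSum fun j _ => hrow j]
  refine Finset.sum_congr rfl fun j _ => ?_
  rw [intervalIntegral.integral_finsetSum fun i _ => hterm i j]
  refine Finset.sum_congr rfl fun i _ => ?_
  rw [intervalIntegral.integral_mul_const, intervalIntegral.integral_const_mul]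

end Matrix

theorem integral_cexp_neg_mul {s : ℂ} (hs : s ≠ 0) (t : ℝ) :
    ∫ τ in (0:ℝ)..t, Complex.exp (-τ * s) = (1 - Complex.exp (-(s * t))) / s := by
  simp_rw [neg_mul, ← mul_neg, mul_comm _ (-s)]
  rw [integral_exp_mul_complex (neg_ne_zero.mpr hs)]
  simp only [Complex.ofReal_zero, mul_zero, Complex.exp_zero]
  rw [div_neg, ← neg_div, neg_sub, neg_mul, mul_neg]

theorem backward_gramian_closed_form_matrix_input_general
    {n m : ℕ} (A : Matrix (Fin n) (Fin n) ℝ) (Q : Matrix (Fin n) (Fin n) ℂ)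
    (lam : Fin n → ℂ) (B : Matrix (Fin n) (Fin m) ℝ)
    (hQ : IsUnit Q.det)
    (hA : A.map (Complex.ofReal) = Q * Matrix.diagonal lam * Q⁻¹)
    (hlam : ∀ k l : Fin n, lam k + starRingEnd ℂ (lam l) ≠ 0)
    (Ψ : Matrix (Fin n) (Fin n) ℂ)
    (hΨ : Ψ = (Q⁻¹ * B.map (Complex.ofReal)) * (Q⁻¹ * B.map (Complex.ofReal))ᴴ)
    (t : ℝ) :
    (Matrix.of fun k l : Fin n =>
        ∫ τ in (0:ℝ)..t,
          (NormedSpace.exp ((-τ) • A) * (B * Bᵀ) *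
            NormedSpace.exp ((-τ) • Aᵀ)) k l).map (Complex.ofReal)
      = Q * (Matrix.of fun k l : Fin n =>
            Ψ k l / (lam k + starRingEnd ℂ (lam l)) *
              (1 - Complex.exp (-((lam k + starRingEnd ℂ (lam l)) * t)))) * Qᴴ := by
  have hQu : IsUnit Q := (isUnit_iff_isUnit_det Q).mpr hQ
  have hintegrand (τ : ℝ) :
      (NormedSpace.exp ((-τ) • A) * (B * Bᵀ) * NormedSpace.exp ((-τ) • Aᵀ)).map Complex.ofReal
        = Q * (of fun i j => Ψ i j * Complex.exp (-τ * (lam i + conj (lam j)))) * Qᴴ := by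
    rw [exp_smul_mul_mul_exp_smul_transpose_map_ofReal_of_diagonalization hQu hA _ (-τ),
      Complex.ofReal_neg, hΨ, map_ofReal_mul_s3, transpose_map_ofReal, conjTranspose_mul]
    simp only [Matrix.mul_assoc]
  have hmodes (i j : Fin n) :
      Continuous fun τ : ℝ => Ψ i j * Complex.exp (-τ * (lam i + conj (lam j))) := by
    fun_prop
  calc _ = of fun k l => ∫ τ in (0:ℝ)..t,
          (Q * (of fun i j => Ψ i j * Complex.exp (-τ * (lam i + conj (lam j)))) * Qᴴ) k l := by
        ext k l
        rw [map_apply, of_apply, of_apply, ← intervalIntegral.integral_ofReal]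
        exact intervalIntegral.integral_congr fun τ _ => by rw [← hintegrand, map_apply]
    _ = _ := by
        rw [intervalIntegral_mul_mul]
        · congr 2
          ext k l
          simp only [of_apply]
          rw [intervalIntegral.integral_const_mul, integral_cexp_neg_mul (hlam k l)]
          ring
        · exact fun i j => (hmodes i j).intervalIntegrable _ _

/-- closed form of the backward Gramian integral with a matrix input
`∫₀ᵗ e^{−Aτ} B Bᵀ e^{−Aᵀτ} dτ = Q Θb(t) Qᴴ` where
`Θb(t)ₖₗ = ψₖₗ/(λₖ+conj λₗ)·(1−e^{−(λₖ+conj λₗ)t})` and `Ψ = Q⁻¹B (Q⁻¹B)ᴴ`. -/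
theorem backward_gramian_closed_form_matrix_input
    {n m : ℕ} (A : Matrix (Fin n) (Fin n) ℝ) (Q : Matrix (Fin n) (Fin n) ℂ)
    (lam : Fin n → ℂ) (B : Matrix (Fin n) (Fin m) ℝ)
    (hQ : IsUnit Q.det)
    (hA : A.map (Complex.ofReal) = Q * Matrix.diagonal lam * Q⁻¹)
    (hlam : ∀ k l : Fin n, lam k + starRingEnd ℂ (lam l) ≠ 0)
    (Ψ : Matrix (Fin n) (Fin n) ℂ)
    (hΨ : Ψ = (Q⁻¹ * B.map (Complex.ofReal)) * (Q⁻¹ * B.map (Complex.ofReal))ᴴ)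
    (t : ℝ) (ht : 0 ≤ t) :
    (Matrix.of fun k l : Fin n =>
        ∫ τ in (0:ℝ)..t,
          (NormedSpace.exp ((-τ) • A) * (B * Bᵀ) *
            NormedSpace.exp ((-τ) • Aᵀ)) k l).map (Complex.ofReal)
      = Q * (Matrix.of fun k l : Fin n =>
            Ψ k l / (lam k + starRingEnd ℂ (lam l)) *
              (1 - Complex.exp (-((lam k + starRingEnd ℂ (lam l)) * t)))) * Qᴴ :=
  backward_gramian_closed_form_matrix_input_general A Q lam B hQ hA hlam Ψ hΨ t
end
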